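/- Let D be positive semidefinite symmetric on ℝ^m with smallest eigenvalue bounded below by some μ > 0 (i.e. D − μI is positive semidefinite), δ ∈ ℝ^m, and λ > 0. Then ‖(D + λI)^{-1/2}δ‖² ≤ ‖D^{-1/2}δ‖² ≤ (1 + λ/μ)·‖(D + λI)^{-1/2}δ‖². -/

import Mathlib

open Matrix
noncomputable def Matrix.PosSemidef.sqrt {n 𝕜 : Type*} [Fintype n] [RCLike 𝕜] [PartialOrder 𝕜] [StarOrderedRing 𝕜]
    [DecidableEq n]
    {A : Matrix n n 𝕜} (hA : A.PosSemidef) : Matrix n n 𝕜 :=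
  hA.1.eigenvectorUnitary.1 * diagonal ((↑) ∘ (√·) ∘ hA.1.eigenvalues) *
    (star hA.1.eigenvectorUnitary : Matrix n n 𝕜)

lemma Matrix.PosSemidef.posSemidef_sqrt {m : ℕ} {A : Matrix (Fin m) (Fin m) ℝ}
    (hA : A.PosSemidef) : hA.sqrt.PosSemidef := by
  have h := (posSemidef_diagonal_iff (R := ℝ)
    (d := (RCLike.ofReal ∘ (√·) ∘ hA.1.eigenvalues : Fin m → ℝ))).mpr (fun i => by simp [Real.sqrt_nonneg])
  have := h.mul_mul_conjTranspose_same (hA.1.eigenvectorUnitary : Matrix (Fin m) (Fin m) ℝ)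
  unfold Matrix.PosSemidef.sqrt
  convert this using 1
  simp [star_eq_conjTranspose]

lemma Matrix.PosSemidef.sqrt_mul_self {m : ℕ} {A : Matrix (Fin m) (Fin m) ℝ}
    (hA : A.PosSemidef) : hA.sqrt * hA.sqrt = A := by
  set E : Matrix (Fin m) (Fin m) ℝ := diagonal (RCLike.ofReal ∘ (√·) ∘ hA.1.eigenvalues) with hEdef
  have hE : E * E = diagonal (RCLike.ofReal ∘ hA.1.eigenvalues) := by
    rw [hEdef, diagonal_mul_diagonal]; congr 1; funext i
    simp [Real.mul_self_sqrt (hA.eigenvalues_nonneg i)]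
  have hU : (star hA.1.eigenvectorUnitary : Matrix (Fin m) (Fin m) ℝ) * hA.1.eigenvectorUnitary.1 = 1 := by
    simp
  unfold Matrix.PosSemidef.sqrt
  rw [← hEdef]
  conv_rhs => rw [hA.1.spectral_theorem, Unitary.conjStarAlgAut_apply]
  rw [← hE]
  calc _ = (hA.1.eigenvectorUnitary.1 * E) * ((star hA.1.eigenvectorUnitary : Matrix (Fin m) (Fin m) ℝ) * hA.1.eigenvectorUnitary.1) * E * (star hA.1.eigenvectorUnitary : Matrix (Fin m) (Fin m) ℝ) := by simp only [mul_assoc]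
    _ = _ := by rw [hU, mul_one]; simp only [mul_assoc]

private lemma symm_of_isHermitian {m : ℕ} {S : Matrix (Fin m) (Fin m) ℝ}
    (hS : S.IsHermitian) : Sᵀ = S := by
  have := hS.eq
  rwa [show Sᴴ = Sᵀ from by ext i j; simp [conjTranspose_apply]] at this

private lemma dot_mulVec_symm {m : ℕ} {S : Matrix (Fin m) (Fin m) ℝ}
    (hS : Sᵀ = S) (u v : Fin m → ℝ) :
    (S *ᵥ u) ⬝ᵥ v = u ⬝ᵥ (S *ᵥ v) := by
  rw [dotProduct_comm, dotProduct_mulVec, ← mulVec_transpose, hS, dotProduct_comm]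

/-- Key lemma: if `A ⪯ c • B` as quadratic forms (A, B posdef) then
`B⁻¹ ⪯ c • A⁻¹` as quadratic forms. -/
private lemma quad_inv_le {m : ℕ} {A B : Matrix (Fin m) (Fin m) ℝ}
    (hA : A.PosDef) (hB : B.PosDef) (c : ℝ) (hc : 0 < c)
    (h : ∀ y : Fin m → ℝ, y ⬝ᵥ (A *ᵥ y) ≤ c * (y ⬝ᵥ (B *ᵥ y)))
    (x : Fin m → ℝ) : x ⬝ᵥ (B⁻¹ *ᵥ x) ≤ c * (x ⬝ᵥ (A⁻¹ *ᵥ x)) := by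
  classical
  set S := hA.posSemidef.sqrt with hSdef
  have hSS : S * S = A := hA.posSemidef.sqrt_mul_self
  have hSsymm : Sᵀ = S := symm_of_isHermitian hA.posSemidef.posSemidef_sqrt.isHermitian
  have hdet : IsUnit S.det := by
    have h2 : S.det * S.det = A.det := by rw [← det_mul, hSS]
    have : A.det ≠ 0 := ne_of_gt hA.det_pos
    exact isUnit_iff_ne_zero.mpr (fun h0 => this (by rw [← h2, h0, zero_mul]))
  have hSinvsymm : (S⁻¹)ᵀ = S⁻¹ := by rw [transpose_nonsing_inv, hSsymm]
  set y := B⁻¹ *ᵥ x with hy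
  have hBdet : IsUnit B.det := isUnit_iff_ne_zero.mpr hB.det_pos.ne'
  have hBy : B *ᵥ y = x := by
    rw [hy, mulVec_mulVec, mul_nonsing_inv _ hBdet, one_mulVec]
  set q := x ⬝ᵥ y with hq
  set r := x ⬝ᵥ (A⁻¹ *ᵥ x) with hr
  -- u, v
  set u := S *ᵥ y with hu
  set v := S⁻¹ *ᵥ x with hv
  have huv : u ⬝ᵥ v = q := by
    rw [hu, hv, dot_mulVec_symm hSsymm, mulVec_mulVec, mul_nonsing_inv _ hdet, one_mulVec,
      dotProduct_comm]
  have huu : u ⬝ᵥ u = y ⬝ᵥ (A *ᵥ y) := by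
    rw [hu, dot_mulVec_symm hSsymm, mulVec_mulVec, hSS]
  have hvv : v ⬝ᵥ v = r := by
    rw [hv, hr, dot_mulVec_symm hSinvsymm, mulVec_mulVec, ← Matrix.mul_inv_rev, hSS]
  have hq0 : 0 ≤ q := by
    have := hB.posSemidef.inv.dotProduct_mulVec_nonneg x
    simpa [hq, hy] using this
  have hr0 : 0 ≤ r := by
    have := hA.posSemidef.inv.dotProduct_mulVec_nonneg x
    simpa [hr] using this
  have hcs : (u ⬝ᵥ v) ^ 2 ≤ (u ⬝ᵥ u) * (v ⬝ᵥ v) := by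
    simpa [dotProduct, pow_two, mul_comm, mul_assoc, mul_left_comm] using
      Finset.sum_mul_sq_le_sq_mul_sq Finset.univ u v
  have hAy : y ⬝ᵥ (A *ᵥ y) ≤ c * q := by
    have := h y
    rw [hBy] at this
    rwa [dotProduct_comm y x] at this
  have hAy0 : 0 ≤ y ⬝ᵥ (A *ᵥ y) := by simpa using hA.posSemidef.dotProduct_mulVec_nonneg y
  have key : q ^ 2 ≤ c * q * r := by
    calc q ^ 2 = (u ⬝ᵥ v) ^ 2 := by rw [huv]
    _ ≤ (u ⬝ᵥ u) * (v ⬝ᵥ v) := hcs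
    _ = (y ⬝ᵥ (A *ᵥ y)) * r := by rw [huu, hvv]
    _ ≤ (c * q) * r := by exact mul_le_mul_of_nonneg_right hAy hr0
  rcases eq_or_lt_of_le hq0 with h0 | h0
  · rw [← h0]; positivity
  · have : q * q ≤ (c * r) * q := by nlinarith [key]
    exact le_of_mul_le_mul_right (by linarith [this]) h0

private lemma dot_sqrt_inv {m : ℕ} {A : Matrix (Fin m) (Fin m) ℝ} (hA : A.PosSemidef)
    (hA' : A.PosDef) (x : Fin m → ℝ) :
    (hA.sqrt⁻¹ *ᵥ x) ⬝ᵥ (hA.sqrt⁻¹ *ᵥ x) = x ⬝ᵥ (A⁻¹ *ᵥ x) := by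
  set S := hA.sqrt with hSdef
  have hSS : S * S = A := hA.sqrt_mul_self
  have hSsymm : Sᵀ = S := symm_of_isHermitian hA.posSemidef_sqrt.isHermitian
  have hSinvsymm : (S⁻¹)ᵀ = S⁻¹ := by rw [transpose_nonsing_inv, hSsymm]
  rw [dot_mulVec_symm hSinvsymm, mulVec_mulVec, ← Matrix.mul_inv_rev, hSS]

/-- If `D − μI ⪰ 0` with `μ > 0` then
`‖(D+λI)^{-1/2}δ‖² ≤ ‖D^{-1/2}δ‖² ≤ (1 + λ/μ)‖(D+λI)^{-1/2}δ‖²`. -/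
theorem regularized_vs_unregularized_bounds (m : ℕ) (D : Matrix (Fin m) (Fin m) ℝ)
    (hD : D.PosSemidef) (μ : ℝ) (hμ : 0 < μ)
    (hDμ : (D - μ • (1 : Matrix (Fin m) (Fin m) ℝ)).PosSemidef)
    (δ : Fin m → ℝ) (t : ℝ) (ht : 0 < t)
    (hDt : (D + t • (1 : Matrix (Fin m) (Fin m) ℝ)).PosSemidef) :
    (hDt.sqrt⁻¹ *ᵥ δ) ⬝ᵥ (hDt.sqrt⁻¹ *ᵥ δ) ≤ (hD.sqrt⁻¹ *ᵥ δ) ⬝ᵥ (hD.sqrt⁻¹ *ᵥ δ) ∧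
    (hD.sqrt⁻¹ *ᵥ δ) ⬝ᵥ (hD.sqrt⁻¹ *ᵥ δ) ≤
      (1 + t / μ) * ((hDt.sqrt⁻¹ *ᵥ δ) ⬝ᵥ (hDt.sqrt⁻¹ *ᵥ δ)) := by
  have hμ1 : (μ • (1 : Matrix (Fin m) (Fin m) ℝ)).PosDef := by
    rw [smul_one_eq_diagonal]
    exact PosDef.diagonal (fun _ => hμ)
  have ht1 : (t • (1 : Matrix (Fin m) (Fin m) ℝ)).PosDef := by
    rw [smul_one_eq_diagonal]
    exact PosDef.diagonal (fun _ => ht)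
  have hDpos : D.PosDef := by
    have hrw : D = (D - μ • 1) + μ • 1 := by abel
    rw [hrw]
    exact PosDef.posSemidef_add hDμ hμ1
  have hDtpos : (D + t • (1 : Matrix (Fin m) (Fin m) ℝ)).PosDef := PosDef.posSemidef_add hD ht1
  rw [dot_sqrt_inv hD hDpos, dot_sqrt_inv hDt hDtpos]
  -- quadratic form facts
  have hquad1 : ∀ y : Fin m → ℝ, y ⬝ᵥ (D *ᵥ y) ≤
      1 * (y ⬝ᵥ ((D + t • (1 : Matrix (Fin m) (Fin m) ℝ)) *ᵥ y)) := by
    intro y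
    have := ht1.posSemidef.dotProduct_mulVec_nonneg y
    simp only [star_trivial] at this
    rw [one_mul, add_mulVec, dotProduct_add]
    linarith
  have hquad2 : ∀ y : Fin m → ℝ, y ⬝ᵥ ((D + t • (1 : Matrix (Fin m) (Fin m) ℝ)) *ᵥ y) ≤
      (1 + t / μ) * (y ⬝ᵥ (D *ᵥ y)) := by
    intro y
    have hsub := hDμ.dotProduct_mulVec_nonneg y
    simp only [star_trivial, sub_mulVec, dotProduct_sub] at hsub
    -- y ⬝ᵥ (μ•1 *ᵥ y) ≤ y ⬝ᵥ D *ᵥ y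
    have hμy : μ * (y ⬝ᵥ y) ≤ y ⬝ᵥ (D *ᵥ y) := by
      have : y ⬝ᵥ ((μ • (1 : Matrix (Fin m) (Fin m) ℝ)) *ᵥ y) = μ * (y ⬝ᵥ y) := by
        simp [smul_mulVec, dotProduct_smul, smul_eq_mul]
      linarith [hsub, this.symm.le]
    rw [add_mulVec, dotProduct_add]
    have hty : y ⬝ᵥ ((t • (1 : Matrix (Fin m) (Fin m) ℝ)) *ᵥ y) = t * (y ⬝ᵥ y) := by
      simp [smul_mulVec, dotProduct_smul, smul_eq_mul]
    rw [hty]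
    have h1 : t * (y ⬝ᵥ y) ≤ (t / μ) * (y ⬝ᵥ (D *ᵥ y)) := by
      have := mul_le_mul_of_nonneg_left hμy (le_of_lt (div_pos ht hμ))
      calc t * (y ⬝ᵥ y) = (t / μ) * (μ * (y ⬝ᵥ y)) := by field_simp
      _ ≤ (t / μ) * (y ⬝ᵥ (D *ᵥ y)) := this
    linarith
  constructor
  · have := quad_inv_le hDpos hDtpos 1 one_pos hquad1 δ
    simpa using this
  · exact quad_inv_le hDtpos hDpos (1 + t / μ) (by positivity) hquad2 δ
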